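/- arXiv:2301.01859 — 3 statements merged into one kernel-verified Lean document; each statement's English description precedes it below -/
import Mathlib

section
/- Let j be a positive integer, n = ⌈(-3 + √(8j+1))/2⌉, r = j - n(n+1)/2, and define m = r - 1 if (n even and r odd) or (n odd and r even), and m = -r if (n even and r even) or (n odd and r odd). Then |m| ≤ n and n - m is even. -/
/-!
The ceiling makes `n` the index of the triangular numbers enclosing `j`:
`n (n + 1) / 2 < j ≤ (n + 1) (n + 2) / 2`, i.e. the offset `r` lies in `[1, n + 1]`.
For `r ≤ n` both branches give `|m| ≤ n`, and `r = n + 1` forces the parities of `n` and `r`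
to differ, so it falls in the branch `m = r - 1 = n`. In each branch the parity condition
is exactly what makes `n - m` even.
-/

lemma triangular_bounds_of_eq_ceil {x : ℝ} (hx : 0 < x) {n : ℤ}
    (hn : n = ⌈(-3 + Real.sqrt (8 * x + 1)) / 2⌉) :
    n * (n + 1) < 2 * x ∧ 2 * x ≤ (n + 1) * (n + 2) := by
  set s := Real.sqrt (8 * x + 1)
  have hs_sq : s ^ 2 = 8 * x + 1 := Real.sq_sqrt (by positivity)
  have hs_gt : 1 < s := by
    rw [show (1 : ℝ) = Real.sqrt 1 by simp]
    exact Real.sqrt_lt_sqrt zero_le_one (by linarith)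
  obtain ⟨hlt, hle⟩ := (Int.ceil_eq_iff).mp hn.symm
  have hn_gt : (-1 : ℝ) < n := by linarith
  have hn_nonneg : 0 ≤ n := by
    have : (-1 : ℤ) < n := by exact_mod_cast hn_gt
    omega
  constructor <;> nlinarith

lemma one_le_sub_half_mul_succ {n j : ℤ} (hlo : n * (n + 1) < 2 * j)
    (hhi : 2 * j ≤ (n + 1) * (n + 2)) :
    1 ≤ j - n * (n + 1) / 2 ∧ j - n * (n + 1) / 2 ≤ n + 1 := by
  obtain ⟨k, hk⟩ := Int.even_mul_succ_self n
  rw [hk] at hlo ⊢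
  have : (n + 1) * (n + 2) = k + k + 2 * (n + 1) := by linarith
  omega

lemma abs_le_and_two_dvd_sub_of_parity {n r : ℤ} (hr₀ : 1 ≤ r) (hr₁ : r ≤ n + 1) :
    |if (Even n ↔ Even r) then -r else r - 1| ≤ n ∧
      2 ∣ n - if (Even n ↔ Even r) then -r else r - 1 := by
  rw [abs_le]
  split_ifs with h <;> simp only [Int.even_iff] at h <;> refine ⟨⟨?_, ?_⟩, ?_⟩ <;> omega

theorem recovered_m_is_bornwolf (j : ℕ) (hj : 1 ≤ j) (n r m : ℤ)
    (hn : n = ⌈(-3 + Real.sqrt (8 * j + 1)) / 2⌉)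
    (hr : r = (j : ℤ) - n * (n + 1) / 2)
    (hm : m = if (Even n ↔ Even r) then -r else r - 1) :
    |m| ≤ n ∧ (2 : ℤ) ∣ (n - m) := by
  obtain ⟨hlo, hhi⟩ := triangular_bounds_of_eq_ceil (by exact_mod_cast hj) hn
  obtain ⟨hr₀, hr₁⟩ := one_le_sub_half_mul_succ (j := j) (by exact_mod_cast hlo)
    (by exact_mod_cast hhi)
  rw [← hr] at hr₀ hr₁
  exact hm ▸ abs_le_and_two_dvd_sub_of_parity hr₀ hr₁
end

section
/- The composition of the index conversions is the identity on positive integers: for every positive integer j, if (n, m) are defined from j by n = ⌈(-3+√(8j+1))/2⌉, r = j - n(n+1)/2, and m = r-1 when 2∤r, 2|n or 2|r, 2∤n (i.e. when n and r have opposite parity), m = -r otherwise, then n(n+1)/2 + |m| + u(m) = j. -/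
theorem j_to_nm_to_j (j : ℕ) (hj : 1 ≤ j) (n r m : ℤ)
    (hn : n = ⌈(-3 + Real.sqrt (8 * j + 1)) / 2⌉)
    (hr : r = (j : ℤ) - n * (n + 1) / 2)
    (hm : m = if (Even n ↔ Even r) then -r else r - 1) :
    n * (n + 1) / 2 + |m| + (if 0 ≤ m then 1 else 0) = (j : ℤ) := by
  have hj1 : (1:ℝ) ≤ (j:ℝ) := by exact_mod_cast hj
  set s := Real.sqrt (8 * j + 1) with hs
  have hsnn : (0:ℝ) ≤ 8 * (j:ℝ) + 1 := by linarith
  have hs3 : (3:ℝ) ≤ s := by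
    have : (3:ℝ) = Real.sqrt 9 := by
      rw [show (9:ℝ) = 3 ^ 2 by norm_num, Real.sqrt_sq (by norm_num)]
    rw [this]
    exact Real.sqrt_le_sqrt (by push_cast; linarith)
  have hlt : (n:ℝ) < (-3 + s) / 2 + 1 := by
    rw [hn]; exact Int.ceil_lt_add_one _
  have hn0 : 0 ≤ n := by
    rw [hn]
    exact Int.ceil_nonneg (by linarith)
  have hsq : ((2 * n + 1 : ℤ) : ℝ) ^ 2 < 8 * (j:ℝ) + 1 := by
    have h1 : (2 * (n:ℝ) + 1) < s := by linarith
    have h0 : (0:ℝ) ≤ 2 * (n:ℝ) + 1 := by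
      have : (0:ℝ) ≤ (n:ℝ) := by exact_mod_cast hn0
      linarith
    have := Real.sq_sqrt hsnn
    push_cast
    nlinarith
  have hk : n * (n + 1) < 2 * (j : ℤ) := by
    have : (2 * n + 1 : ℤ) ^ 2 < 8 * (j : ℤ) + 1 := by exact_mod_cast hsq
    nlinarith
  have heven : (2:ℤ) ∣ n * (n + 1) := (Int.even_mul_succ_self n).two_dvd
  have hdiv : n * (n + 1) / 2 < (j : ℤ) := by omega
  have hr1 : 1 ≤ r := by omega
  rw [hm]
  split_ifs with h1 h2 h2
  · rw [abs_of_nonpos (by linarith)]; omega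
  · rw [abs_of_nonpos (by linarith)]; omega
  · rw [abs_of_nonneg (by linarith)]; omega
  · omega
end

section
/- For every pair of Born-Wolf indices (n, m) and (n', m'), j(n, m) = j(n', m') implies (n, m) = (n', m'), where j(n,m) = n(n+1)/2 + |m| + u(m); in particular for fixed n, distinct admissible m yield Noll indices that exhaust the integer interval [n(n+1)/2 + 1, n(n+1)/2 + n + 1]. -/
/-!
The Noll index `j(n, m)` lies in the block `(T n, T n + n + 1]` above the triangular number
`T n = n (n + 1) / 2`, and `T (n + 1) = T n + (n + 1)`, so these blocks partition the positive
integers and `j` determines `n`. Within a block, `m ≥ 0` is sent to `m + 1` and `m < 0` to `-m`;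
the two cases can only collide when `m - m'` is odd, which the common parity of `m, m'` with `n`
forbids. Conversely every `k ∈ [1, n + 1]` is hit: by `m = k - 1` if `n - (k - 1)` is even,
and by `m = -k` otherwise.
-/

def nollIndex (n : ℕ) (m : ℤ) : ℕ :=
  n * (n + 1) / 2 + m.natAbs + if 0 ≤ m then 1 else 0

lemma triangular_succ (n : ℕ) : (n + 1) * (n + 2) / 2 = n * (n + 1) / 2 + (n + 1) := by
  have hexpand : (n + 1) * (n + 2) = n * (n + 1) + 2 * (n + 1) := by ring
  obtain ⟨k, hk⟩ := Nat.even_mul_succ_self n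
  omega

lemma triangular_monotone : Monotone fun n : ℕ => n * (n + 1) / 2 :=
  fun _ _ h => Nat.div_le_div_right (Nat.mul_le_mul h (Nat.succ_le_succ h))

lemma triangular_add_lt_of_lt {n n' a a' : ℕ} (hn : n < n') (ha : a ≤ n + 1) (ha' : 0 < a') :
    n * (n + 1) / 2 + a < n' * (n' + 1) / 2 + a' :=
  calc n * (n + 1) / 2 + a ≤ (n + 1) * (n + 2) / 2 := by rw [triangular_succ]; omega
    _ ≤ n' * (n' + 1) / 2 := triangular_monotone (show n + 1 ≤ n' from hn)
    _ < n' * (n' + 1) / 2 + a' := by omega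

lemma eq_of_triangular_add_eq {n n' a a' : ℕ} (ha : a ∈ Set.Icc 1 (n + 1))
    (ha' : a' ∈ Set.Icc 1 (n' + 1)) (h : n * (n + 1) / 2 + a = n' * (n' + 1) / 2 + a') :
    n = n' := by
  rcases lt_trichotomy n n' with hlt | heq | hgt
  · exact absurd h (triangular_add_lt_of_lt hlt ha.2 ha'.1).ne
  · exact heq
  · exact absurd h (triangular_add_lt_of_lt hgt ha'.2 ha.1).ne'

lemma natAbs_add_ite_mem_Icc (m : ℤ) :
    m.natAbs + (if 0 ≤ m then 1 else 0) ∈ Set.Icc 1 (m.natAbs + 1) := by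
  constructor <;> split <;> omega

lemma nollIndex_eq_iff {n : ℕ} {m : ℤ} (k : ℕ) :
    nollIndex n m = n * (n + 1) / 2 + k ↔ m.natAbs + (if 0 ≤ m then 1 else 0) = k := by
  rw [nollIndex, add_assoc, Nat.add_left_cancel_iff]

lemma eq_of_natAbs_add_ite_eq {m m' : ℤ} (hpar : (2 : ℤ) ∣ m - m')
    (h : m.natAbs + (if 0 ≤ m then 1 else 0) = m'.natAbs + (if 0 ≤ m' then 1 else 0)) :
    m = m' := by
  split_ifs at h <;> omega

lemma nollIndex_mem_Icc {n : ℕ} {m : ℤ} (hm : m.natAbs ≤ n) :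
    nollIndex n m ∈ Set.Icc (n * (n + 1) / 2 + 1) (n * (n + 1) / 2 + n + 1) := by
  obtain ⟨hlo, hhi⟩ := natAbs_add_ite_mem_Icc m
  rw [nollIndex, add_assoc]
  constructor <;> omega

lemma exists_nollIndex_eq {n j : ℕ}
    (hj : j ∈ Set.Icc (n * (n + 1) / 2 + 1) (n * (n + 1) / 2 + n + 1)) :
    ∃ m : ℤ, m.natAbs ≤ n ∧ (2 : ℤ) ∣ ((n : ℤ) - m) ∧ j = nollIndex n m := by
  obtain ⟨k, rfl⟩ : ∃ k, j = n * (n + 1) / 2 + k := ⟨j - n * (n + 1) / 2, by have := hj.1; omega⟩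
  have hk : 1 ≤ k ∧ k ≤ n + 1 := by obtain ⟨h₁, h₂⟩ := hj; omega
  by_cases hpar : (2 : ℤ) ∣ (n : ℤ) - (k - 1)
  · refine ⟨k - 1, by omega, hpar, ((nollIndex_eq_iff k).2 ?_).symm⟩
    rw [if_pos (by omega)]; omega
  · refine ⟨-k, by omega, by omega, ((nollIndex_eq_iff k).2 ?_).symm⟩
    rw [if_neg (by omega)]; omega

theorem noll_injective_and_exhaustive :
    (∀ (n : ℕ) (m : ℤ) (n' : ℕ) (m' : ℤ),
        m.natAbs ≤ n → (2 : ℤ) ∣ ((n : ℤ) - m) →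
        m'.natAbs ≤ n' → (2 : ℤ) ∣ ((n' : ℤ) - m') →
        n * (n + 1) / 2 + m.natAbs + (if 0 ≤ m then 1 else 0) =
          n' * (n' + 1) / 2 + m'.natAbs + (if 0 ≤ m' then 1 else 0) →
        n = n' ∧ m = m') ∧
    (∀ n : ℕ,
      {j : ℕ | ∃ m : ℤ, m.natAbs ≤ n ∧ (2 : ℤ) ∣ ((n : ℤ) - m) ∧
          j = n * (n + 1) / 2 + m.natAbs + (if 0 ≤ m then 1 else 0)} =
        Set.Icc (n * (n + 1) / 2 + 1) (n * (n + 1) / 2 + n + 1)) := by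
  refine ⟨fun n m n' m' hm hnm hm' hnm' h => ?_, fun n => ?_⟩
  · simp only [add_assoc] at h
    have hn : n = n' := eq_of_triangular_add_eq
      (Set.Icc_subset_Icc_right (by omega) (natAbs_add_ite_mem_Icc m))
      (Set.Icc_subset_Icc_right (by omega) (natAbs_add_ite_mem_Icc m')) h
    subst hn
    exact ⟨rfl, eq_of_natAbs_add_ite_eq (by omega) (Nat.add_left_cancel h)⟩
  · ext j
    constructor
    · rintro ⟨m, hm, -, rfl⟩
      exact nollIndex_mem_Icc hm
    · exact exists_nollIndex_eq
end
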